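/- Let k ≥ 1 and let D be a digraph with a maximal spanning out-tree T. If for some 0 ≤ i ≤ k−1 the digraph D_i^2 contains an oriented cycle with at least 6 blocks, then D contains a subdivision of C(k,1,1,1). -/

import Mathlib

universe u
variable {V : Type u}

/-- Directed walks of a given length along a relation. -/
inductive DWalk (T : V → V → Prop) : V → V → ℕ → Prop
  | refl (v : V) : DWalk T v v 0
  | cons {u v w : V} {n : ℕ} : T u v → DWalk T v w n → DWalk T u w (n + 1)

/-- `Anc T y x` : `y` is an ancestor of `x` in `T` (`y ≤_T x`). -/
def Anc (T : V → V → Prop) (y x : V) : Prop := Relation.ReflTransGen T y x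

/-- `T` is an out-tree of the digraph `D` with vertex set `S` and root `r`. -/
def IsOutTreeOn (D T : V → V → Prop) (S : Set V) (r : V) : Prop :=
  r ∈ S ∧ (∀ x y, T x y → D x y ∧ x ∈ S ∧ y ∈ S) ∧ (∀ v, ¬ T v r) ∧
  (∀ v ∈ S, v ≠ r → ∃! u, T u v) ∧ (∀ v ∈ S, Relation.ReflTransGen T r v)

/-- `T` is a spanning out-tree of `D` rooted at `r`. -/
def IsSpanningOutTree (D T : V → V → Prop) (r : V) : Prop :=
  IsOutTreeOn D T Set.univ r

/-- `lvl` is the level function of the out-tree `T` rooted at `r`. -/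
def IsLevelFun (T : V → V → Prop) (r : V) (lvl : V → ℕ) : Prop :=
  ∀ v, DWalk T r v (lvl v)

/-- `T` is a maximal spanning out-tree of `D`: for every backward arc `(x,y)`
(`l_T(x) ≥ l_T(y)`) there is a directed path from `y` to `x` in `T`. -/
def IsMaximalSOT (D T : V → V → Prop) (r : V) (lvl : V → ℕ) : Prop :=
  IsSpanningOutTree D T r ∧ IsLevelFun T r lvl ∧
    ∀ x y, D x y → lvl y ≤ lvl x → Anc T y x

/-- `l` is the vertex list of a directed path from `a` to `b` in `D`. -/
def IsDPath (D : V → V → Prop) (a b : V) (l : List V) : Prop :=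
  l.head? = some a ∧ l.getLast? = some b ∧ l.Chain' D ∧ l.Nodup

/-- Interior vertices of a path given by its vertex list. -/
def pint (l : List V) : List V := l.tail.dropLast

/-- `D` contains a subdivision of the four-blocks cycle `C(k,1,1,1)`:
four internally disjoint directed paths `x1→y1` (length ≥ k), `x2→y1`, `x2→y2`, `x1→y2`
(lengths ≥ 1). -/
def HasSubdivCk111 (D : V → V → Prop) (k : ℕ) : Prop :=
  ∃ (x1 x2 y1 y2 : V) (p1 p2 p3 p4 : List V),
    IsDPath D x1 y1 p1 ∧ IsDPath D x2 y1 p2 ∧ IsDPath D x2 y2 p3 ∧ IsDPath D x1 y2 p4 ∧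
    k + 1 ≤ p1.length ∧ 2 ≤ p2.length ∧ 2 ≤ p3.length ∧ 2 ≤ p4.length ∧
    x1 ≠ x2 ∧ x1 ≠ y1 ∧ x1 ≠ y2 ∧ x2 ≠ y1 ∧ x2 ≠ y2 ∧ y1 ≠ y2 ∧
    (∀ v, (v = x1 ∨ v = x2 ∨ v = y1 ∨ v = y2) →
      v ∉ pint p1 ∧ v ∉ pint p2 ∧ v ∉ pint p3 ∧ v ∉ pint p4) ∧
    (∀ v ∈ pint p1, v ∉ pint p2 ∧ v ∉ pint p3 ∧ v ∉ pint p4) ∧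
    (∀ v ∈ pint p2, v ∉ pint p3 ∧ v ∉ pint p4) ∧
    (∀ v ∈ pint p3, v ∉ pint p4)

/-- Disjointness conditions making `2*m` blocks (paths `P j : x j → y j` and
`Q j : x (j+1) → y j`) into an oriented cycle with `2*m` blocks. -/
def BlockDisjoint (m : ℕ) (x y : ℕ → V) (P Q : ℕ → List V) : Prop :=
  (∀ i < m, ∀ j < m, i ≠ j → x i ≠ x j) ∧
  (∀ i < m, ∀ j < m, i ≠ j → y i ≠ y j) ∧
  (∀ i < m, ∀ j < m, x i ≠ y j) ∧
  (∀ i < m, ∀ j < m, ∀ v, (v ∈ pint (P i) ∨ v ∈ pint (Q i)) → v ≠ x j ∧ v ≠ y j) ∧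
  (∀ i < m, ∀ j < m, i ≠ j → ∀ v, v ∈ pint (P i) → v ∉ pint (P j)) ∧
  (∀ i < m, ∀ j < m, i ≠ j → ∀ v, v ∈ pint (Q i) → v ∉ pint (Q j)) ∧
  (∀ i < m, ∀ j < m, ∀ v, v ∈ pint (P i) → v ∉ pint (Q j))

/-- The relation `R` contains an oriented cycle with exactly `2*m` blocks. -/
def HasBlockCycle (R : V → V → Prop) (m : ℕ) : Prop :=
  ∃ (x y : ℕ → V) (P Q : ℕ → List V),
    (∀ j < m, IsDPath R (x j) (y j) (P j) ∧ 2 ≤ (P j).length) ∧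
    (∀ j < m, IsDPath R (x ((j + 1) % m)) (y j) (Q j) ∧ 2 ≤ (Q j).length) ∧
    BlockDisjoint m x y P Q

/-- Arcs of `D_i^1` : arcs of `D` inside the residue class `i mod k` of levels
which are forward for the tree order. -/
def Di1 (D T : V → V → Prop) (lvl : V → ℕ) (k i : ℕ) : V → V → Prop :=
  fun a b => D a b ∧ lvl a % k = i ∧ lvl b % k = i ∧ Anc T a b

/-- Arcs of `D_i^2` : backward for the tree order. -/
def Di2 (D T : V → V → Prop) (lvl : V → ℕ) (k i : ℕ) : V → V → Prop :=
  fun a b => D a b ∧ lvl a % k = i ∧ lvl b % k = i ∧ Anc T b a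

/-- Arcs of `D_i^3` : between tree-incomparable vertices. -/
def Di3 (D T : V → V → Prop) (lvl : V → ℕ) (k i : ℕ) : V → V → Prop :=
  fun a b => D a b ∧ lvl a % k = i ∧ lvl b % k = i ∧ ¬ Anc T a b ∧ ¬ Anc T b a

/-- `D` contains a mixed cycle with respect to `T` (and the level function `lvl`). -/
def HasMixedCycle (D T : V → V → Prop) (lvl : V → ℕ) (k : ℕ) : Prop :=
  ∃ i < k, ∃ m, 2 ≤ m ∧ ∃ (x y : ℕ → V) (P Q : ℕ → List V) (z1 : V) (l1 l2 : List V),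
    IsDPath D (x 0) (y 0) (P 0) ∧
    P 0 = l1 ++ z1 :: l2 ∧ z1 ≠ y 0 ∧
    List.Chain' T (l1 ++ [z1]) ∧ List.Chain' (Di1 D T lvl k i) (z1 :: l2) ∧
    (∀ j, 1 ≤ j → j < m → IsDPath (Di1 D T lvl k i) (x j) (y j) (P j) ∧ 2 ≤ (P j).length) ∧
    (∀ j < m, IsDPath (Di1 D T lvl k i) (x ((j + 1) % m)) (y j) (Q j) ∧ 2 ≤ (Q j).length) ∧
    BlockDisjoint m x y P Q ∧
    (∀ j < m, Anc T (x j) (x 0) → Anc T (x 0) (x j))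

/-- `D` contains a back-mixed cycle with respect to `T`. -/
def HasBackMixedCycle (D T : V → V → Prop) (lvl : V → ℕ) (k : ℕ) : Prop :=
  ∃ i < k, ∃ m, 3 ≤ m ∧ ∃ (x y : ℕ → V) (P Q : ℕ → List V) (z1 : V) (l1 l2 : List V),
    (∀ j < m, IsDPath (Di2 D T lvl k i) (y j) (x j) (P j) ∧ 2 ≤ (P j).length) ∧
    (∀ j, j < m - 1 → IsDPath (Di2 D T lvl k i) (y j) (x ((j + 1) % m)) (Q j) ∧ 2 ≤ (Q j).length) ∧
    IsDPath D (y (m - 1)) (x 0) (Q (m - 1)) ∧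
    Q (m - 1) = l1 ++ z1 :: l2 ∧ z1 ≠ y (m - 1) ∧
    List.Chain' (Di2 D T lvl k i) (l1 ++ [z1]) ∧ List.Chain' T (z1 :: l2) ∧
    BlockDisjoint m y x P Q ∧
    (∀ j < m, ∀ v, (v ∈ P j ∨ v ∈ Q j) → Anc T v z1 → Anc T z1 v)

/-- `G` contains a wheel as a subgraph: a chordless cycle together with a vertex
adjacent to at least three vertices of the cycle. -/
def HasWheel (G : SimpleGraph V) : Prop :=
  ∃ (n : ℕ) (c : Fin (n + 3) → V) (v : V),
    Function.Injective c ∧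
    (∀ i, G.Adj (c i) (c (i + 1))) ∧
    (∀ i j, G.Adj (c i) (c j) → j = i + 1 ∨ i = j + 1) ∧
    (∀ i, v ≠ c i) ∧
    (∃ i1 i2 i3 : Fin (n + 3), i1 ≠ i2 ∧ i1 ≠ i3 ∧ i2 ≠ i3 ∧
      G.Adj v (c i1) ∧ G.Adj v (c i2) ∧ G.Adj v (c i3))

/-! Let `y t` be a sink of the cycle of maximal level. Arcs of `D_i^2` lead to tree ancestors,
so `y (t-1)`, `y t` and `y (t+1)` are ancestors of the sources `x t`, `x (t+1)` next to `y t`.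
Ancestors of a common vertex are comparable, so by the maximality of its level `y (t±1) ≤_T y t`,
and then `y (t-1)`, `y (t+1)` are comparable, say `y (t+1) ≤_T y (t-1)`. The oriented path
`y (t+1) ← x (t+1) → y t ← x t → y (t-1)` is closed into a cycle with four blocks by following
the block from `x (t+1)` to its first vertex `v ≤_T y (t-1)` and then the tree path from `v` to
`y (t-1)`. The levels of `v` and `y (t-1)` are congruent mod `k`, so this tree path has length at
least `k`; all its vertices but the last are strict ancestors of `y (t-1)`, whereas the other
three blocks consist of descendants of it. -/

open Function Relation

theorem mem_pint_iff {R : V → V → Prop} {a b w : V} {l : List V} (hl : IsDPath R a b l) :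
    w ∈ pint l ↔ w ∈ l ∧ w ≠ a ∧ w ≠ b := by
  obtain ⟨ha, hb, -, hnd⟩ := hl
  obtain ⟨t, rfl⟩ := List.head?_eq_some_iff.1 ha
  rcases List.eq_nil_or_concat' t with rfl | ⟨L, c, rfl⟩
  · simp_all [pint]
  · rw [← List.cons_append, List.getLast?_concat, Option.some_inj] at hb
    subst hb
    simp only [List.nodup_cons, List.nodup_append, List.mem_append] at hnd
    simp only [pint, List.tail_cons, List.dropLast_concat, List.mem_cons, List.mem_append]
    grind

theorem mem_of_mem_pint {l : List V} {w : V} (h : w ∈ pint l) : w ∈ l :=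
  List.mem_of_mem_tail (List.mem_of_mem_dropLast h)

namespace IsDPath

variable {R : V → V → Prop} {a b : V} {l : List V}

theorem mono {S : V → V → Prop} (hRS : ∀ a b, R a b → S a b) (hl : IsDPath R a b l) :
    IsDPath S a b l :=
  ⟨hl.1, hl.2.1, hl.2.2.1.imp fun x y => hRS x y, hl.2.2.2⟩

theorem head_mem (hl : IsDPath R a b l) : a ∈ l :=
  List.mem_of_mem_head? hl.1

theorem last_mem (hl : IsDPath R a b l) : b ∈ l :=
  List.mem_of_getLast? hl.2.1

theorem reflTransGen_of_mem (hl : IsDPath R a b l) {w : V} (hw : w ∈ l) :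
    ReflTransGen R a w ∧ ReflTransGen R w b := by
  obtain ⟨ha, hb, hc, -⟩ := hl
  constructor
  · exact hc.induction (ReflTransGen R a) _ (fun _ _ h hx => hx.tail h)
      (fun hne => by rw [(List.head_eq_iff_head?_eq_some hne).mpr ha]) _ hw
  · exact hc.backwards_induction (ReflTransGen R · b) _ (fun _ _ h hy => hy.head h)
      (fun hne => by rw [(List.getLast_eq_iff_getLast?_eq_some hne).mpr hb]) _ hw

end IsDPath

section Tree

variable {T : V → V → Prop}

theorem DWalk.eq_of_zero {a b : V} (h : DWalk T a b 0) : a = b := by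
  cases h; rfl

theorem DWalk.snoc {a b c : V} {n : ℕ} (h : DWalk T a b n) (hbc : T b c) :
    DWalk T a c (n + 1) := by
  induction h with
  | refl => exact .cons hbc (.refl c)
  | cons hab _ ih => exact .cons hab (ih hbc)

theorem DWalk.exists_snoc {a c : V} {n : ℕ} (h : DWalk T a c (n + 1)) :
    ∃ b, DWalk T a b n ∧ T b c := by
  induction n generalizing a with
  | zero =>
    cases h with
    | cons hab w => exact ⟨a, .refl a, w.eq_of_zero ▸ hab⟩
  | succ n ih =>
    cases h with
    | cons hab w =>
      obtain ⟨b, w', hbc⟩ := ih w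
      exact ⟨b, .cons hab w', hbc⟩

theorem DWalk.length_unique {r v : V} (hroot : ∀ u, ¬ T u r) (hpar : Relator.LeftUnique T)
    {n n' : ℕ} (h : DWalk T r v n) (h' : DWalk T r v n') : n = n' := by
  induction n generalizing v n' with
  | zero =>
    obtain rfl := h.eq_of_zero
    cases n' with
    | zero => rfl
    | succ n' => obtain ⟨b, -, hb⟩ := h'.exists_snoc; exact (hroot b hb).elim
  | succ n ih =>
    obtain ⟨b, hw, hb⟩ := h.exists_snoc
    cases n' with
    | zero => obtain rfl := h'.eq_of_zero; exact (hroot b hb).elim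
    | succ n' =>
      obtain ⟨b', hw', hb'⟩ := h'.exists_snoc
      rw [ih hw (hpar hb' hb ▸ hw')]

theorem IsSpanningOutTree.leftUnique {D : V → V → Prop} {r : V}
    (hT : IsSpanningOutTree D T r) : Relator.LeftUnique T := by
  intro u u' v hu hu'
  obtain ⟨-, -, hroot, hpar, -⟩ := hT
  have hvr : v ≠ r := by rintro rfl; exact hroot u hu
  exact (hpar v (Set.mem_univ v) hvr).unique hu hu'

theorem IsMaximalSOT.lvl_succ {D : V → V → Prop} {r : V} {lvl : V → ℕ}
    (hT : IsMaximalSOT D T r lvl) (u v : V) (h : T u v) : lvl v = lvl u + 1 :=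
  DWalk.length_unique hT.1.2.2.1 hT.1.leftUnique (hT.2.1 v) ((hT.2.1 u).snoc h)

theorem anc_total (hpar : Relator.LeftUnique T) {a b c : V} (ha : Anc T a c) (hb : Anc T b c) :
    Anc T a b ∨ Anc T b a :=
  (ReflTransGen.total_of_right_unique (r := swap T) (fun _ _ _ h h' => hpar h h')
    (reflTransGen_swap.2 ha) (reflTransGen_swap.2 hb)).symm.imp
      reflTransGen_swap.1 reflTransGen_swap.1

variable {lvl : V → ℕ}

theorem lvl_le_of_anc (hstep : ∀ u v, T u v → lvl v = lvl u + 1) {u v : V} (h : Anc T u v) :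
    lvl u ≤ lvl v := by
  induction h with
  | refl => rfl
  | tail _ hbc ih => rw [hstep _ _ hbc]; omega

theorem lvl_lt_of_anc (hstep : ∀ u v, T u v → lvl v = lvl u + 1) {u v : V} (h : Anc T u v)
    (hne : u ≠ v) : lvl u < lvl v := by
  obtain rfl | ⟨c, huc, hcv⟩ := h.cases_tail
  · exact absurd rfl hne
  · rw [hstep _ _ hcv]; exact Nat.lt_succ_of_le (lvl_le_of_anc hstep huc)

theorem eq_of_anc_of_lvl_le (hstep : ∀ u v, T u v → lvl v = lvl u + 1) {u v : V}
    (h : Anc T u v) (hlvl : lvl v ≤ lvl u) : u = v :=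
  by_contra fun hne => (lvl_lt_of_anc hstep h hne).not_ge hlvl

theorem anc_of_anc_of_lvl_le (hstep : ∀ u v, T u v → lvl v = lvl u + 1)
    (hpar : Relator.LeftUnique T) {u v w : V} (hu : Anc T u w) (hv : Anc T v w)
    (hlvl : lvl u ≤ lvl v) : Anc T u v := by
  rcases anc_total hpar hu hv with h | h
  · exact h
  · exact eq_of_anc_of_lvl_le hstep h hlvl ▸ .refl

theorem exists_treePath (hstep : ∀ u v, T u v → lvl v = lvl u + 1) {u v : V}
    (h : Anc T u v) : ∃ l, IsDPath T u v l ∧ l.length + lvl u = lvl v + 1 := by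
  induction h using ReflTransGen.head_induction_on with
  | refl =>
    exact ⟨[v], ⟨rfl, rfl, List.isChain_singleton v, List.nodup_singleton v⟩, Nat.add_comm _ _⟩
  | @head a c hac _ ih =>
    obtain ⟨l, hl, hlen⟩ := ih
    obtain ⟨t, rfl⟩ := List.head?_eq_some_iff.1 hl.1
    have ha : a ∉ c :: t := fun ha => (lvl_le_of_anc hstep (hl.reflTransGen_of_mem ha).1).not_gt
      (hstep _ _ hac ▸ Nat.lt_succ_self _)
    refine ⟨a :: c :: t, ⟨rfl, ?_, hl.2.2.1.cons_cons hac, hl.2.2.2.cons ha⟩, ?_⟩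
    · rw [List.getLast?_cons_cons]; exact hl.2.1
    · simp only [List.length_cons] at hlen ⊢; rw [hstep _ _ hac] at hlen; omega

end Tree

section Di2

variable {D T : V → V → Prop} {lvl : V → ℕ} {k i : ℕ}

theorem IsDPath.anc_of_mem_Di2 {a b w : V} {l : List V} (hl : IsDPath (Di2 D T lvl k i) a b l)
    (hw : w ∈ l) : Anc T b w ∧ Anc T w a := by
  have hback : ∀ x y, Di2 D T lvl k i x y → ReflTransGen (swap T) x y :=
    fun _ _ h => reflTransGen_swap.2 h.2.2.2
  obtain ⟨haw, hwb⟩ := hl.reflTransGen_of_mem hw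
  exact ⟨reflTransGen_swap.1 (hwb.lift' id hback), reflTransGen_swap.1 (haw.lift' id hback)⟩

theorem IsDPath.anc_Di2 {a b : V} {l : List V} (hl : IsDPath (Di2 D T lvl k i) a b l) :
    Anc T b a :=
  (hl.anc_of_mem_Di2 hl.head_mem).1

theorem lvl_mod_of_mem_Di2 {l : List V} (hl : l.IsChain (Di2 D T lvl k i))
    (hlen : 2 ≤ l.length) :
    ∀ w ∈ l, lvl w % k = i :=
  match l, hl, hlen with
  | _ :: _ :: _, hl, _ =>
    hl.induction _ _ (fun _ _ h _ => h.2.2.1) fun _ => (List.isChain_cons_cons.1 hl).1.2.1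

end Di2

theorem IsDPath.exists_prefix_append_treePath {D T : V → V → Prop} {lvl : V → ℕ}
    {x y z : V} {p : List V} (hp : IsDPath D x y p) (hTD : ∀ a b, T a b → D a b)
    (hstep : ∀ u v, T u v → lvl v = lvl u + 1) (hy : Anc T y z) (hx : ¬ Anc T x z) :
    ∃ v ∈ p, Anc T v z ∧ ∃ q, IsDPath D x z q ∧ lvl z + 2 ≤ q.length + lvl v ∧
      ∀ w ∈ pint q, w ∈ pint p ∨ (Anc T w z ∧ w ≠ z) := by
  classical
  -- `v` is the first vertex of `p` with `v ≤_T z`; the part of `p` before it avoids the tree path.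
  obtain ⟨v, hv⟩ : ∃ v, p.find? (fun w => decide (Anc T w z)) = some v :=
    Option.isSome_iff_exists.1 (List.find?_isSome.2 ⟨y, hp.last_mem, decide_eq_true hy⟩)
  obtain ⟨hvz, l₁, l₂, hsplit, hl₁⟩ := List.find?_eq_some_iff_append.1 hv
  simp only [decide_eq_true_eq, Bool.not_eq_true', decide_eq_false_iff_not] at hvz hl₁
  obtain ⟨R, hR, hRlen⟩ := exists_treePath hstep hvz
  have hRz : ∀ w ∈ R, Anc T w z := fun w hw => (hR.reflTransGen_of_mem hw).2
  obtain ⟨hph, -, hpc, hpnd⟩ := id hp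
  rw [hsplit] at hph hpc hpnd
  have hl₁ne : l₁ ≠ [] := by
    rintro rfl
    exact hx (Option.some_inj.1 hph ▸ hvz)
  have hRne : R ≠ [] := List.ne_nil_of_mem hR.head_mem
  obtain ⟨hc₁, -, hlink⟩ := List.isChain_append.1 hpc
  have hq : IsDPath D x z (l₁ ++ R) := by
    refine ⟨?_, ?_, ?_, ?_⟩
    · rwa [List.head?_append_of_ne_nil _ hl₁ne] at hph ⊢
    · rw [List.getLast?_append_of_ne_nil _ hRne]; exact hR.2.1
    · refine List.isChain_append.2 ⟨hc₁, hR.2.2.1.imp fun a b => hTD a b, fun a ha b hb => ?_⟩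
      rw [hR.1, Option.mem_some_iff] at hb
      exact hb ▸ hlink a ha v rfl
    · exact List.nodup_append.2 ⟨(List.nodup_append.1 hpnd).1, hR.2.2.2,
        fun a ha b hb hab => hl₁ a ha (hab ▸ hRz b hb)⟩
  refine ⟨v, hsplit ▸ by simp, hvz, l₁ ++ R, hq, ?_, fun w hw => ?_⟩
  · have := List.length_pos_iff.2 hl₁ne
    rw [List.length_append]; omega
  · obtain ⟨hwq, hwx, hwz⟩ := (mem_pint_iff hq).1 hw
    rcases List.mem_append.1 hwq with hw₁ | hwR
    · refine .inl ((mem_pint_iff hp).2 ⟨hsplit ▸ by simp [hw₁], hwx, ?_⟩)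
      rintro rfl
      exact hl₁ w hw₁ hy
    · exact .inr ⟨hRz w hwR, hwz⟩

theorem exists_cyclic_neighbors {m t : ℕ} (hm : 3 ≤ m) (ht : t < m) :
    ∃ a < m, ∃ b < m, a ≠ t ∧ a ≠ b ∧ t ≠ b ∧ (t + 1) % m = a ∧ (b + 1) % m = t := by
  refine ⟨if t + 1 < m then t + 1 else 0, by split_ifs <;> omega,
    if t = 0 then m - 1 else t - 1, by split_ifs <;> omega, by split_ifs <;> omega,
    by split_ifs <;> omega, by split_ifs <;> omega, ?_, ?_⟩
  · split_ifs with h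
    · exact Nat.mod_eq_of_lt h
    · rw [show t + 1 = m by omega, Nat.mod_self]
  · split_ifs with h
    · rw [h, Nat.sub_add_cancel (by omega), Nat.mod_self]
    · rw [Nat.sub_add_cancel (by omega), Nat.mod_eq_of_lt ht]

/-- The oriented path `y₀ ← x₁ → y₁ ← x₂ → y₂` with four blocks. -/
def IsZigzag (R : V → V → Prop) (y₀ x₁ y₁ x₂ y₂ : V) (P₁ Q₁ P₂ Q₂ : List V) : Prop :=
  IsDPath R x₁ y₀ P₁ ∧ IsDPath R x₁ y₁ Q₁ ∧ IsDPath R x₂ y₁ P₂ ∧ IsDPath R x₂ y₂ Q₂ ∧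
  (∀ p ∈ [P₁, Q₁, P₂, Q₂], 2 ≤ p.length) ∧ [y₀, x₁, y₁, x₂, y₂].Nodup ∧
  (∀ p ∈ [P₁, Q₁, P₂, Q₂], ∀ v ∈ [y₀, x₁, y₁, x₂, y₂], v ∉ pint p) ∧
  [pint P₁, pint Q₁, pint P₂, pint Q₂].Pairwise List.Disjoint

theorem exists_zigzag_of_blockCycle {R : V → V → Prop} {m t : ℕ} {x y : ℕ → V}
    {P Q : ℕ → List V} (hm : 3 ≤ m)
    (hP : ∀ j < m, IsDPath R (x j) (y j) (P j) ∧ 2 ≤ (P j).length)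
    (hQ : ∀ j < m, IsDPath R (x ((j + 1) % m)) (y j) (Q j) ∧ 2 ≤ (Q j).length)
    (hD : BlockDisjoint m x y P Q) (ht : t < m) :
    ∃ a < m, ∃ b < m, IsZigzag R (y a) (x a) (y t) (x t) (y b) (P a) (Q t) (P t) (Q b) := by
  obtain ⟨a, ha, b, hb, hat, hab, htb, hta, hbt⟩ := exists_cyclic_neighbors hm ht
  refine ⟨a, ha, b, hb, ?_⟩
  obtain ⟨hx, hy, hxy, hend, hPP, hQQ, hPQ⟩ := hD
  have hQt := hQ t ht
  have hQb := hQ b hb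
  rw [hta] at hQt
  rw [hbt] at hQb
  refine ⟨(hP a ha).1, hQt.1, (hP t ht).1, hQb.1, ?_, ?_, ?_, ?_⟩
  · simp only [List.mem_cons, List.not_mem_nil, or_false, forall_eq_or_imp, forall_eq]
    exact ⟨(hP a ha).2, hQt.2, (hP t ht).2, hQb.2⟩
  all_goals clear hP hQ hQt hQb hta hbt
  · simp only [List.nodup_cons, List.mem_cons, List.not_mem_nil, or_false, not_or]
    grind
  · simp only [List.mem_cons, List.not_mem_nil, or_false, forall_eq_or_imp, forall_eq]
    grind
  · simp only [List.pairwise_cons, List.mem_cons, List.not_mem_nil, or_false,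
      forall_eq_or_imp, forall_eq, List.Disjoint]
    grind

namespace IsZigzag

variable {R : V → V → Prop} {y₀ x₁ y₁ x₂ y₂ : V} {P₁ Q₁ P₂ Q₂ : List V}

theorem symm (h : IsZigzag R y₀ x₁ y₁ x₂ y₂ P₁ Q₁ P₂ Q₂) :
    IsZigzag R y₂ x₂ y₁ x₁ y₀ Q₂ P₂ Q₁ P₁ := by
  obtain ⟨h₁, h₂, h₃, h₄, hlen, hnd, hend, hdisj⟩ := h
  refine ⟨h₄, h₃, h₂, h₁, ?_, ?_, ?_, ?_⟩
  · simp only [List.mem_cons, List.not_mem_nil, or_false, forall_eq_or_imp, forall_eq] at hlen ⊢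
    tauto
  · simp only [List.nodup_cons, List.mem_cons, List.not_mem_nil, or_false, not_or] at hnd ⊢
    grind
  · simp only [List.mem_cons, List.not_mem_nil, or_false, forall_eq_or_imp, forall_eq] at hend ⊢
    tauto
  · simp only [List.pairwise_cons, List.mem_cons, List.not_mem_nil, or_false, forall_eq_or_imp,
      forall_eq] at hdisj ⊢
    grind [List.Disjoint.symm]

theorem hasSubdivCk111 {D : V → V → Prop} {k : ℕ} (hRD : ∀ a b, R a b → D a b)
    (hZ : IsZigzag R y₀ x₁ y₁ x₂ y₂ P₁ Q₁ P₂ Q₂) {q : List V} (hq : IsDPath D x₁ y₂ q)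
    (hlen : k + 1 ≤ q.length)
    (hint : ∀ w ∈ pint q, w ∈ pint P₁ ∨ (w ∉ Q₁ ∧ w ∉ P₂ ∧ w ∉ Q₂)) :
    HasSubdivCk111 D k := by
  obtain ⟨-, h₂, h₃, h₄, hlens, hnd, hend, hdisj⟩ := hZ
  simp only [List.mem_cons, List.not_mem_nil, or_false, forall_eq_or_imp, forall_eq] at hlens hend
  simp only [List.nodup_cons, List.mem_cons, List.not_mem_nil, or_false, not_or] at hnd
  simp only [List.pairwise_cons, List.mem_cons, List.not_mem_nil, or_false, forall_eq_or_imp,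
    forall_eq, List.Disjoint] at hdisj
  refine ⟨x₁, x₂, y₂, y₁, q, Q₂, P₂, Q₁, hq, h₄.mono hRD, h₃.mono hRD, h₂.mono hRD, hlen,
    hlens.2.2.2, hlens.2.2.1, hlens.2.1, ?_⟩
  grind [mem_of_mem_pint, h₂.head_mem, h₂.last_mem, h₃.head_mem, h₄.last_mem]

variable {D T : V → V → Prop} {r : V} {lvl : V → ℕ} {k i : ℕ}

theorem anc_of_lvl_le_Di2 (hT : IsMaximalSOT D T r lvl)
    (hZ : IsZigzag (Di2 D T lvl k i) y₀ x₁ y₁ x₂ y₂ P₁ Q₁ P₂ Q₂) (h₀ : lvl y₀ ≤ lvl y₁)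
    (h₂ : lvl y₂ ≤ lvl y₁) : Anc T y₀ y₁ ∧ Anc T y₂ y₁ :=
  ⟨anc_of_anc_of_lvl_le hT.lvl_succ hT.1.leftUnique hZ.1.anc_Di2 hZ.2.1.anc_Di2 h₀,
    anc_of_anc_of_lvl_le hT.lvl_succ hT.1.leftUnique hZ.2.2.2.1.anc_Di2 hZ.2.2.1.anc_Di2 h₂⟩

theorem hasSubdivCk111_of_Di2 (hT : IsMaximalSOT D T r lvl)
    (hZ : IsZigzag (Di2 D T lvl k i) y₀ x₁ y₁ x₂ y₂ P₁ Q₁ P₂ Q₂) (h₀₂ : Anc T y₀ y₂)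
    (h₂₁ : Anc T y₂ y₁) : HasSubdivCk111 D k := by
  have hstep := hT.lvl_succ
  obtain ⟨hP₁, hQ₁, hP₂, hQ₂, hlen, hnd, hend, -⟩ := id hZ
  simp only [List.mem_cons, List.not_mem_nil, or_false, forall_eq_or_imp, forall_eq] at hlen hend
  simp only [List.nodup_cons, List.mem_cons, List.not_mem_nil, or_false, not_or] at hnd
  obtain ⟨⟨-, -, -, hy₀y₂⟩, ⟨-, -, hx₁y₂⟩, -⟩ := hnd
  have habove : ∀ w, w ∈ Q₁ ∨ w ∈ P₂ ∨ w ∈ Q₂ → Anc T y₂ w := by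
    rintro w (hw | hw | hw)
    exacts [h₂₁.trans (hQ₁.anc_of_mem_Di2 hw).1, h₂₁.trans (hP₂.anc_of_mem_Di2 hw).1,
      (hQ₂.anc_of_mem_Di2 hw).1]
  have hbelow : ∀ w, Anc T w y₂ → w ≠ y₂ → w ∉ Q₁ ∧ w ∉ P₂ ∧ w ∉ Q₂ := fun w hw hne => by
    have := fun h => hne (eq_of_anc_of_lvl_le hstep hw (lvl_le_of_anc hstep (habove w h)))
    tauto
  have hx₁ : ¬ Anc T x₁ y₂ := fun h => (hbelow x₁ h hx₁y₂).1 hQ₁.head_mem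
  obtain ⟨v, hvP₁, hvy₂, q, hq, hqlen, hqint⟩ :=
    (hP₁.mono fun _ _ h => h.1).exists_prefix_append_treePath (fun a b h => (hT.1.2.1 a b h).1)
      hstep h₀₂ hx₁
  have hv : v ≠ y₂ := fun h => hend.1.2.2.2.2
    ((mem_pint_iff hP₁).2 ⟨h ▸ hvP₁, Ne.symm hx₁y₂, Ne.symm hy₀y₂⟩)
  have hmod : lvl v ≡ lvl y₂ [MOD k] :=
    (lvl_mod_of_mem_Di2 hP₁.2.2.1 hlen.1 v hvP₁).trans
      (lvl_mod_of_mem_Di2 hQ₂.2.2.1 hlen.2.2.2 y₂ hQ₂.last_mem).symm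
  have := hmod.add_le_of_lt (lvl_lt_of_anc hstep hvy₂ hv)
  exact hZ.hasSubdivCk111 (fun a b h => h.1) hq (by omega)
    fun w hw => (hqint w hw).imp_right fun ⟨hwy₂, hne⟩ => hbelow w hwy₂ hne

end IsZigzag

theorem blockCycle_Di2_gives_subdivision_general {V : Type u} (D T : V → V → Prop) (r : V)
    (lvl : V → ℕ) (k : ℕ) (hT : IsMaximalSOT D T r lvl)
    (h : ∃ i < k, ∃ m, 3 ≤ m ∧ HasBlockCycle (Di2 D T lvl k i) m) :
    HasSubdivCk111 D k := by
  obtain ⟨i, -, m, hm, x, y, P, Q, hP, hQ, hD⟩ := h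
  obtain ⟨t, ht, htmax⟩ := (Finset.range m).exists_max_image (fun j => lvl (y j))
    ⟨0, Finset.mem_range.2 (by omega)⟩
  obtain ⟨a, ha, b, hb, hZ⟩ := exists_zigzag_of_blockCycle hm hP hQ hD (Finset.mem_range.1 ht)
  obtain ⟨hat, hbt⟩ := hZ.anc_of_lvl_le_Di2 hT (htmax a (Finset.mem_range.2 ha))
    (htmax b (Finset.mem_range.2 hb))
  rcases anc_total hT.1.leftUnique hat hbt with hab | hba
  · exact hZ.hasSubdivCk111_of_Di2 hT hab hbt
  · exact hZ.symm.hasSubdivCk111_of_Di2 hT hba hat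

/-- a cycle with at least 6 blocks in some `D_i^2` forces a subdivision of
C(k,1,1,1). -/
theorem blockCycle_Di2_gives_subdivision {V : Type u} (D T : V → V → Prop) (r : V)
    (lvl : V → ℕ) (k : ℕ) (hk : 1 ≤ k) (hT : IsMaximalSOT D T r lvl)
    (h : ∃ i < k, ∃ m, 3 ≤ m ∧ HasBlockCycle (Di2 D T lvl k i) m) :
    HasSubdivCk111 D k :=
  blockCycle_Di2_gives_subdivision_general D T r lvl k hT h
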